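/- Fix real numbers a11, a12, a21, a22, σx, σy, R with a22 ≠ 0 and R > 0. Let ε₀ > 0 and let s11, s12, s22 : (0, ε₀) → ℝ be such that for each ε ∈ (0, ε₀), (s11(ε), s12(ε), s22(ε)) solves the two-scale algebraic Riccati system, and suppose s11 and s12 are bounded on (0, ε₀). Then the residual ε ↦ −s11(ε)²/R + 2*ã*(1 − ε*â)*s11(ε) + σx²*(1 − 2ε*â) + ε*σy²*a12²/a22² is O(ε²) as ε → 0⁺. -/

import Mathlib

/-!
The third equation gives `s22` in terms of `s12`, and the second gives
`a21 * s11 + a22 * s12 = O(ε)`; eliminating `s22` and then `s12` from the first equation to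
second order leaves a residual of the exact form `ε ^ 2 * g (ε, s11, s12)` with `g` a fixed
polynomial. Since `s11` and `s12` are bounded, `g` is bounded on the relevant compact box.
-/

/-- The two-scale algebraic Riccati system. -/
def SolvesRiccati (a11 a12 a21 a22 σx σy R ε s11 s12 s22 : ℝ) : Prop :=
  0 = σx ^ 2 - s11 ^ 2 / R + 2 * a11 * s11 + 2 * a12 * s12 ∧
  0 = a11 * s12 + a12 * s22 - s11 * s12 / R + s11 * a21 / ε + s12 * a22 / ε ∧
  0 = σy ^ 2 / ε - s12 ^ 2 / R + 2 * s12 * a21 / ε + 2 * s22 * a22 / ε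

open Set

/-- The slow residual, in the notation `ã = a11 - a12 * a21 / a22`, `â = a12 * a21 / a22 ^ 2`. -/
noncomputable def slowResidual (a11 a12 a21 a22 σx σy R ε s : ℝ) : ℝ :=
  -s ^ 2 / R
    + 2 * (a11 - a12 * a21 / a22) * (1 - ε * (a12 * a21 / a22 ^ 2)) * s
    + σx ^ 2 * (1 - 2 * ε * (a12 * a21 / a22 ^ 2))
    + ε * σy ^ 2 * a12 ^ 2 / a22 ^ 2

/-- The coefficient of `ε ^ 2` in `slowResidual`, as a function of `(ε, s11, s12)`. -/
noncomputable def slowResidualRemainder (a11 a12 a21 a22 σy R : ℝ)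
    (p : ℝ × ℝ × ℝ) : ℝ :=
  (R * a22 ^ 2 * a12 ^ 2 * p.2.2 ^ 2
    - a12 * (R * (a11 * a22 + a12 * a21) - a22 * p.2.1)
      * (2 * a22 * p.2.2 * (R * a11 - p.2.1)
        + a12 * (p.1 * p.2.2 ^ 2 - σy ^ 2 * R - 2 * a21 * R * p.2.2)))
  / (R ^ 2 * a22 ^ 4)

theorem continuous_slowResidualRemainder (a11 a12 a21 a22 σy R : ℝ) :
    Continuous (slowResidualRemainder a11 a12 a21 a22 σy R) := by
  unfold slowResidualRemainder
  fun_prop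

namespace SolvesRiccati

variable {a11 a12 a21 a22 σx σy R ε s11 s12 s22 : ℝ}

theorem cleared (hR : R ≠ 0) (hε : ε ≠ 0)
    (h : SolvesRiccati a11 a12 a21 a22 σx σy R ε s11 s12 s22) :
    σx ^ 2 * R - s11 ^ 2 + 2 * a11 * s11 * R + 2 * a12 * s12 * R = 0 ∧
    ε * R * (a11 * s12 + a12 * s22) - ε * s11 * s12 + R * (a21 * s11 + a22 * s12) = 0 ∧
    σy ^ 2 * R - ε * s12 ^ 2 + 2 * a21 * s12 * R + 2 * a22 * s22 * R = 0 := by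
  obtain ⟨h1, h2, h3⟩ := h
  field_simp at h1 h2 h3
  exact ⟨by linear_combination -h1, by linear_combination -h2, by linear_combination -h3⟩

theorem slowResidual_eq (ha22 : a22 ≠ 0) (hR : R ≠ 0) (hε : ε ≠ 0)
    (h : SolvesRiccati a11 a12 a21 a22 σx σy R ε s11 s12 s22) :
    slowResidual a11 a12 a21 a22 σx σy R ε s11 =
      ε ^ 2 * slowResidualRemainder a11 a12 a21 a22 σy R (ε, s11, s12) := by
  obtain ⟨h1, h2, h3⟩ := h.cleared hR hε
  unfold slowResidual slowResidualRemainder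
  set P := R * (a11 * a22 + a12 * a21) - a22 * s11
  linear_combination (norm := skip)
    (a22 ^ 2 - 2 * ε * a12 * a21) / (R * a22 ^ 2) * h1
      + 2 * a12 * (ε * P - R * a22 ^ 2) / (R ^ 2 * a22 ^ 3) * h2
      + ε * a12 ^ 2 * (R * a22 ^ 2 - ε * P) / (R ^ 2 * a22 ^ 4) * h3
  field_simp
  ring

end SolvesRiccati

theorem exists_abs_le_mul_sq_of_eq_sq_mul {g : ℝ × ℝ × ℝ → ℝ} (hg : Continuous g)
    {ε₀ M : ℝ} {x y r : ℝ → ℝ}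
    (hr : ∀ ε, 0 < ε → ε < ε₀ → r ε = ε ^ 2 * g (ε, x ε, y ε))
    (hbdd : ∀ ε, 0 < ε → ε < ε₀ → |x ε| ≤ M ∧ |y ε| ≤ M) :
    ∃ C, 0 < C ∧ ∀ ε, 0 < ε → ε < min ε₀ 1 → |r ε| ≤ C * ε ^ 2 := by
  have hbox : IsCompact (Icc (0 : ℝ) 1 ×ˢ Icc (-M) M ×ˢ Icc (-M) M) :=
    isCompact_Icc.prod (isCompact_Icc.prod isCompact_Icc)
  obtain ⟨C, hC⟩ := hbox.exists_bound_of_continuousOn hg.continuousOn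
  refine ⟨max C 1, by positivity, fun ε hε hε₁ => ?_⟩
  have hεε₀ : ε < ε₀ := hε₁.trans_le (min_le_left _ _)
  have hε1 : ε ≤ 1 := (hε₁.trans_le (min_le_right _ _)).le
  obtain ⟨hx, hy⟩ := hbdd ε hε hεε₀
  have hg_le : |g (ε, x ε, y ε)| ≤ max C 1 :=
    (hC _ ⟨⟨hε.le, hε1⟩, abs_le.mp hx, abs_le.mp hy⟩).trans (le_max_left _ _)
  rw [hr ε hε hεε₀, abs_mul, abs_of_nonneg (sq_nonneg ε), mul_comm]
  exact mul_le_mul_of_nonneg_right hg_le (sq_nonneg ε)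

theorem stmt1 (a11 a12 a21 a22 σx σy R : ℝ) (ha22 : a22 ≠ 0) (hR : 0 < R)
    (ε₀ : ℝ) (hε₀ : 0 < ε₀) (s11 s12 s22 : ℝ → ℝ)
    (hsol : ∀ ε, 0 < ε → ε < ε₀ →
      SolvesRiccati a11 a12 a21 a22 σx σy R ε (s11 ε) (s12 ε) (s22 ε))
    (hbdd : ∃ M : ℝ, ∀ ε, 0 < ε → ε < ε₀ → |s11 ε| ≤ M ∧ |s12 ε| ≤ M) :
    ∃ C ε₁ : ℝ, 0 < C ∧ 0 < ε₁ ∧ ε₁ ≤ ε₀ ∧ ∀ ε, 0 < ε → ε < ε₁ →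
      |(-(s11 ε) ^ 2 / R
          + 2 * (a11 - a12 * a21 / a22) * (1 - ε * (a12 * a21 / a22 ^ 2)) * s11 ε
          + σx ^ 2 * (1 - 2 * ε * (a12 * a21 / a22 ^ 2))
          + ε * σy ^ 2 * a12 ^ 2 / a22 ^ 2)| ≤ C * ε ^ 2 := by
  obtain ⟨M, hM⟩ := hbdd
  obtain ⟨C, hC, hbound⟩ := exists_abs_le_mul_sq_of_eq_sq_mul
    (continuous_slowResidualRemainder a11 a12 a21 a22 σy R)
    (r := fun ε => slowResidual a11 a12 a21 a22 σx σy R ε (s11 ε))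
    (fun ε hε hεε₀ => (hsol ε hε hεε₀).slowResidual_eq ha22 hR.ne' hε.ne') hM
  exact ⟨C, min ε₀ 1, hC, lt_min hε₀ one_pos, min_le_left _ _, hbound⟩
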